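/- arXiv:0903.5063 — 3 statements merged into one kernel-verified Lean document; each statement's English description precedes it below -/
import Mathlib

section
/- For the potential V(q) = (1/k)·∑_{i=1}^n q_i^k with k > 2, the number of points [d] ∈ ℂℙ^{n-1} such that V'(d) = γ·d for some γ ∈ ℂ* equals D(n,k) = ((k-1)^n - 1)/(k-2). Equivalently, the set of solutions (q₀, q) ∈ ℂ^{n+1} of q_i^{k-1} = q₀^{k-2}·q_i for i = 1,…,n, viewed projectively, has cardinality (k-1)^n. -/
/-!
The solutions of `V'(d) = d`, i.e. `dᵢ^(k-1) = dᵢ`, form the `n`-fold product of the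
`(k-1)`-element set `{0} ∪ μ_{k-2}`. A point `[d]` with `V'(d) = γ d`, `γ ≠ 0`, has a nonzero
representative solving `V'(d) = d` (rescale `d` by a `(k-2)`-th root of `γ⁻¹`), and two such
representatives differ exactly by a `(k-2)`-th root of unity. So the `(k-1)^n - 1` nonzero
solutions fall into fibres of size `k - 2` over the Darboux points.

In the homogenized system `q₀ = 0` forces `q = 0`, so all its points lie in the chart `q₀ = 1`,
where the system is `V'(d) = d` again.
-/

open MvPolynomial Projectivization
open scoped LinearAlgebra.Projectivization

lemma MvPolynomial.eval_pderiv_inv_mul_sum_X_pow {K σ : Type*} [Field K] [CharZero K] [Fintype σ]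
    [DecidableEq σ] {k : ℕ} (hk : k ≠ 0) (v : σ → K) (i : σ) :
    eval v (pderiv i (C (k : K)⁻¹ * ∑ j, X j ^ k)) = v i ^ (k - 1) := by
  simp [pderiv_X, Pi.single_apply, hk]

lemma Projectivization.rep_mk_iff_of_smul_iff {K V : Type*} [DivisionRing K] [AddCommGroup V]
    [Module K V] {P : V → Prop} (hP : ∀ (a : Kˣ) (v : V), P (a • v) ↔ P v) (v : V) (hv : v ≠ 0) :
    P (mk K v hv).rep ↔ P v := by
  obtain ⟨a, ha⟩ := exists_smul_eq_mk_rep K v hv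
  rw [← ha, hP]

lemma pow_succ_eq_self_iff {M₀ : Type*} [MonoidWithZero M₀] [IsLeftCancelMulZero M₀] {z : M₀}
    {m : ℕ} : z ^ (m + 1) = z ↔ z = 0 ∨ z ^ m = 1 := by
  rcases eq_or_ne z 0 with rfl | hz
  · simp
  · rw [pow_succ', mul_eq_left₀ hz]
    simp [hz]

lemma Complex.card_pow_succ_eq_self (m : ℕ) [NeZero m] :
    Nat.card {z : ℂ // z ^ (m + 1) = z} = m + 1 := by
  have hm : 0 < m := Nat.pos_of_neZero m
  have hset : {z : ℂ | z ^ (m + 1) = z} = insert 0 ↑(Polynomial.nthRootsFinset m (1 : ℂ)) := by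
    ext z
    simp [pow_succ_eq_self_iff, Polynomial.mem_nthRootsFinset hm]
  rw [← Set.coe_ofPred, Nat.card_coe_set_eq, hset, Set.ncard_insert_of_notMem,
    Set.ncard_coe_finset, (Complex.isPrimitiveRoot_exp m hm.ne').card_nthRootsFinset]
  simp [Polynomial.mem_nthRootsFinset hm, hm.ne']

section Darboux

variable (m : ℕ) {ι : Type*}

/- The exponent is shifted, `m = k - 2`, so that `V'(d) = γ d` reads `dᵢ^(m+1) = γ dᵢ`.
`darbouxSolutions` is the case `γ = 1`; `IsDarboux` allows any `γ ≠ 0`. -/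
def darbouxSolutions (ι : Type*) : Set (ι → ℂ) := {d | ∀ i, d i ^ (m + 1) = d i}

def IsDarboux (v : ι → ℂ) : Prop := ∃ γ : ℂ, γ ≠ 0 ∧ ∀ i, v i ^ (m + 1) = γ * v i

variable {m}

lemma card_darbouxSolutions [Fintype ι] [NeZero m] :
    Nat.card (darbouxSolutions m ι) = (m + 1) ^ Fintype.card ι := by
  have e : darbouxSolutions m ι ≃ (ι → {z : ℂ // z ^ (m + 1) = z}) :=
    Equiv.subtypePiEquivPi (p := fun _ z => z ^ (m + 1) = z)
  rw [Nat.card_congr e, Nat.card_fun, Complex.card_pow_succ_eq_self,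
    Nat.card_eq_fintype_card]

lemma isDarboux_units_smul_iff (a : ℂˣ) (v : ι → ℂ) : IsDarboux m (a • v) ↔ IsDarboux m v := by
  suffices h : ∀ (a : ℂˣ) v, IsDarboux m v → IsDarboux m (a • v) from
    ⟨fun hv => by simpa using h a⁻¹ _ hv, h a v⟩
  rintro a v ⟨γ, hγ, hv⟩
  refine ⟨a ^ m * γ, mul_ne_zero (pow_ne_zero _ a.ne_zero) hγ, fun i => ?_⟩
  simp only [Pi.smul_apply, Units.smul_def, smul_eq_mul, mul_pow, hv i]
  ring

lemma isDarboux_of_mem_darbouxSolutions {d : ι → ℂ} (hd : d ∈ darbouxSolutions m ι) :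
    IsDarboux m d :=
  ⟨1, one_ne_zero, fun i => by rw [one_mul, hd i]⟩

lemma IsDarboux.exists_units_smul_mem [NeZero m] {v : ι → ℂ} (hv : IsDarboux m v) :
    ∃ a : ℂˣ, a • v ∈ darbouxSolutions m ι := by
  obtain ⟨γ, hγ, hv⟩ := hv
  obtain ⟨c, hc⟩ := IsAlgClosed.exists_pow_nat_eq γ⁻¹ (Nat.pos_of_neZero m)
  have hc0 : c ≠ 0 := by rintro rfl; simp [zero_pow (NeZero.ne m), eq_comm, hγ] at hc
  refine ⟨Units.mk0 c hc0, fun i => ?_⟩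
  simp only [Pi.smul_apply, Units.smul_def, Units.val_mk0, smul_eq_mul]
  rw [mul_pow, hv i, pow_succ, hc]
  field_simp

lemma units_smul_mem_darbouxSolutions {ζ : ℂˣ} (hζ : ζ ∈ rootsOfUnity m ℂ) {d : ι → ℂ}
    (hd : d ∈ darbouxSolutions m ι) : ζ • d ∈ darbouxSolutions m ι := by
  intro i
  have hζ' : (ζ : ℂ) ^ m = 1 := by simpa using congrArg Units.val ((mem_rootsOfUnity m ζ).1 hζ)
  simp only [Pi.smul_apply, Units.smul_def, smul_eq_mul]
  rw [mul_pow, hd i, pow_succ, hζ', one_mul]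

lemma pow_eq_one_of_units_smul_mem_darbouxSolutions {a : ℂˣ} {d : ι → ℂ}
    (hd : d ∈ darbouxSolutions m ι) (hd0 : d ≠ 0) (had : a • d ∈ darbouxSolutions m ι) :
    a ^ m = 1 := by
  obtain ⟨i, hi⟩ := Function.ne_iff.mp hd0
  have h := had i
  simp only [Pi.smul_apply, Units.smul_def, smul_eq_mul] at h
  rw [mul_pow, hd i, pow_succ, mul_comm _ (a : ℂ), mul_assoc] at h
  exact Units.ext ((mul_eq_right₀ hi).1 (mul_left_cancel₀ a.ne_zero h))

noncomputable def darbouxPoint (d : ↥(darbouxSolutions m ι \ {0})) :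
    {p : ℙ ℂ (ι → ℂ) // IsDarboux m p.rep} :=
  ⟨mk ℂ d.1 d.2.2, (rep_mk_iff_of_smul_iff isDarboux_units_smul_iff _ _).2
    (isDarboux_of_mem_darbouxSolutions d.2.1)⟩

lemma darbouxPoint_surjective [NeZero m] :
    Function.Surjective (darbouxPoint (m := m) (ι := ι)) := by
  rintro ⟨p, hp⟩
  obtain ⟨a, ha⟩ := hp.exists_units_smul_mem
  refine ⟨⟨a • p.rep, ha, (smul_ne_zero_iff_ne a).2 p.rep_nonzero⟩, Subtype.ext ?_⟩
  change mk ℂ (a • p.rep) _ = p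
  conv_rhs => rw [← p.mk_rep]
  exact (mk_eq_mk_iff ℂ _ _ _ _).2 ⟨a, rfl⟩

noncomputable def rootsOfUnityEquivDarbouxFiber (d : ↥(darbouxSolutions m ι \ {0})) :
    rootsOfUnity m ℂ ≃ {e // darbouxPoint e = darbouxPoint d} :=
  Equiv.ofBijective
    (fun ζ => ⟨⟨ζ.1 • d.1, units_smul_mem_darbouxSolutions ζ.2 d.2.1,
      (smul_ne_zero_iff_ne _).2 d.2.2⟩, Subtype.ext ((mk_eq_mk_iff ℂ _ _ _ _).2 ⟨ζ, rfl⟩)⟩)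
    ⟨fun ζ ξ h => by
      have h' : (ζ.1 : ℂ) • d.1 = (ξ.1 : ℂ) • d.1 := congrArg (fun e => e.1.1) h
      exact Subtype.ext (Units.ext (smul_left_injective ℂ d.2.2 h')),
    fun ⟨e, he⟩ => by
      obtain ⟨a, ha⟩ := (mk_eq_mk_iff ℂ _ _ _ _).1 (congrArg Subtype.val he)
      have hroot : a ∈ rootsOfUnity m ℂ := (mem_rootsOfUnity m a).2
        (pow_eq_one_of_units_smul_mem_darbouxSolutions d.2.1 d.2.2 (ha ▸ e.2.1))
      exact ⟨⟨a, hroot⟩, Subtype.ext (Subtype.ext ha)⟩⟩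

lemma card_darbouxSolutions_diff_zero [NeZero m] :
    Nat.card ↥(darbouxSolutions m ι \ {0}) =
      Nat.card {p : ℙ ℂ (ι → ℂ) // IsDarboux m p.rep} * m := by
  have hfiber : ∀ p : {p : ℙ ℂ (ι → ℂ) // IsDarboux m p.rep},
      Nonempty ({e // darbouxPoint e = p} ≃ rootsOfUnity m ℂ) := by
    intro p
    obtain ⟨d, rfl⟩ := darbouxPoint_surjective p
    exact ⟨(rootsOfUnityEquivDarbouxFiber d).symm⟩
  rw [Nat.card_congr ((Equiv.sigmaFiberEquiv darbouxPoint).symm.trans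
    (Equiv.sigmaEquivProdOfEquiv fun p => (hfiber p).some)), Nat.card_prod,
    Complex.card_rootsOfUnity]

lemma card_darbouxPoints [Fintype ι] [NeZero m] :
    Nat.card {p : ℙ ℂ (ι → ℂ) // IsDarboux m p.rep} = ((m + 1) ^ Fintype.card ι - 1) / m := by
  have h0 : (0 : ι → ℂ) ∈ darbouxSolutions m ι := fun _ => zero_pow (Nat.succ_ne_zero m)
  rw [← card_darbouxSolutions, Nat.card_coe_set_eq, ← Set.ncard_sdiff_singleton_of_mem h0,
    ← Nat.card_coe_set_eq, card_darbouxSolutions_diff_zero,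
    Nat.mul_div_cancel _ (Nat.pos_of_neZero m)]

end Darboux

section Homogenized

variable (m n : ℕ)

def homDarbouxSolutions : Set (Fin (n + 1) → ℂ) :=
  {q | ∀ i : Fin n, q i.succ ^ (m + 1) = q 0 ^ m * q i.succ}

variable {m n}

lemma units_smul_mem_homDarbouxSolutions_iff (a : ℂˣ) (q : Fin (n + 1) → ℂ) :
    a • q ∈ homDarbouxSolutions m n ↔ q ∈ homDarbouxSolutions m n := by
  have ha : (a : ℂ) ^ (m + 1) ≠ 0 := pow_ne_zero _ a.ne_zero
  refine forall_congr' fun i => ?_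
  simp only [Pi.smul_apply, Units.smul_def, smul_eq_mul]
  rw [mul_pow, mul_pow, mul_mul_mul_comm, ← pow_succ, mul_right_inj' ha]

lemma cons_one_mem_homDarbouxSolutions_iff (d : Fin n → ℂ) :
    Fin.cons 1 d ∈ homDarbouxSolutions m n ↔ d ∈ darbouxSolutions m (Fin n) := by
  simp [homDarbouxSolutions, darbouxSolutions]

lemma apply_zero_ne_zero_of_mem_homDarbouxSolutions [NeZero m] {q : Fin (n + 1) → ℂ}
    (hq : q ∈ homDarbouxSolutions m n) (hq0 : q ≠ 0) : q 0 ≠ 0 := by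
  refine fun h0 => hq0 (funext fun j => Fin.cases h0 (fun i => ?_) j)
  have h := hq i
  rwa [h0, zero_pow (NeZero.ne m), zero_mul, pow_eq_zero_iff (Nat.succ_ne_zero m)] at h

noncomputable def affineChart (d : darbouxSolutions m (Fin n)) :
    {p : ℙ ℂ (Fin (n + 1) → ℂ) // p.rep ∈ homDarbouxSolutions m n} :=
  ⟨mk ℂ (Fin.cons 1 d.1) (fun h => one_ne_zero (congrFun h 0)),
    (rep_mk_iff_of_smul_iff units_smul_mem_homDarbouxSolutions_iff _ _).2
      ((cons_one_mem_homDarbouxSolutions_iff _).2 d.2)⟩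

lemma affineChart_bijective [NeZero m] :
    Function.Bijective (affineChart (m := m) (n := n)) := by
  refine ⟨fun d e h => ?_, fun ⟨p, hp⟩ => ?_⟩
  · obtain ⟨a, ha⟩ := (mk_eq_mk_iff' ℂ _ _ _ _).1 (congrArg Subtype.val h)
    have ha1 : a = 1 := by simpa using congrFun ha 0
    subst ha1
    exact Subtype.ext (by simpa using ha.symm)
  · have h0 := apply_zero_ne_zero_of_mem_homDarbouxSolutions hp p.rep_nonzero
    have hcons : (Fin.cons 1 fun i => p.rep i.succ / p.rep 0 : Fin (n + 1) → ℂ) =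
        (p.rep 0)⁻¹ • p.rep := by
      refine funext fun j => Fin.cases ?_ (fun i => ?_) j <;> simp [h0, div_eq_inv_mul]
    have hmem : (fun i => p.rep i.succ / p.rep 0) ∈ darbouxSolutions m (Fin n) := by
      rw [← cons_one_mem_homDarbouxSolutions_iff, hcons]
      exact (units_smul_mem_homDarbouxSolutions_iff (Units.mk0 _ (inv_ne_zero h0)) _).2 hp
    refine ⟨⟨_, hmem⟩, Subtype.ext ?_⟩
    change mk ℂ _ _ = p
    conv_rhs => rw [← p.mk_rep]
    exact (mk_eq_mk_iff' ℂ _ _ _ _).2 ⟨(p.rep 0)⁻¹, hcons.symm⟩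

lemma card_homDarbouxPoints [NeZero m] :
    Nat.card {p : ℙ ℂ (Fin (n + 1) → ℂ) // p.rep ∈ homDarbouxSolutions m n} = (m + 1) ^ n := by
  rw [← Nat.card_congr (Equiv.ofBijective _ affineChart_bijective), card_darbouxSolutions,
    Fintype.card_fin]

end Homogenized

theorem stmt4_general (n k : ℕ) (hk : 2 < k) :
    (Nat.card {p : Projectivization ℂ (Fin n → ℂ) //
        ∃ γ : ℂ, γ ≠ 0 ∧ ∀ i,
          eval p.rep (pderiv i (C ((k : ℂ))⁻¹ * ∑ j, X j ^ k)) = γ * p.rep i}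
      = ((k - 1) ^ n - 1) / (k - 2)) ∧
    (Nat.card {p : Projectivization ℂ (Fin (n + 1) → ℂ) //
        ∀ i : Fin n, (p.rep i.succ) ^ (k - 1) = (p.rep 0) ^ (k - 2) * p.rep i.succ}
      = (k - 1) ^ n) := by
  obtain ⟨m, rfl⟩ : ∃ m, k = m + 2 := ⟨k - 2, by omega⟩
  have : NeZero m := ⟨by omega⟩
  simp only [eval_pderiv_inv_mul_sum_X_pow (Nat.succ_ne_zero (m + 1)), Nat.add_sub_cancel,
    show m + 2 - 1 = m + 1 by omega]
  exact ⟨(card_darbouxPoints (ι := Fin n)).trans (by rw [Fintype.card_fin]), card_homDarbouxPoints⟩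

/-- For `V(q) = (1/k)·∑ qᵢᵏ` with `k > 2`, the number of proper Darboux points
`[d] ∈ ℂℙ^{n-1}` (i.e. `V'(d) = γ·d`, `γ ≠ 0`) equals
`D(n,k) = ((k-1)^n - 1)/(k-2)`; equivalently, the projective solution set of
`qᵢ^{k-1} = q₀^{k-2}·qᵢ`, `i = 1,…,n`, has cardinality `(k-1)^n`. -/
theorem stmt4 (n k : ℕ) (hn : 1 ≤ n) (hk : 2 < k) :
    (Nat.card {p : Projectivization ℂ (Fin n → ℂ) //
        ∃ γ : ℂ, γ ≠ 0 ∧ ∀ i,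
          eval p.rep (pderiv i (C ((k : ℂ))⁻¹ * ∑ j, X j ^ k)) = γ * p.rep i}
      = ((k - 1) ^ n - 1) / (k - 2)) ∧
    (Nat.card {p : Projectivization ℂ (Fin (n + 1) → ℂ) //
        ∀ i : Fin n, (p.rep i.succ) ^ (k - 1) = (p.rep 0) ^ (k - 2) * p.rep i.succ}
      = (k - 1) ^ n) :=
  stmt4_general n k hk
end

section
/- Let f₁,…,fₘ ∈ ℂ[x₁,…,xₘ] be polynomials whose top-degree homogeneous parts f₁⁺,…,fₘ⁺ have no common zero other than x = 0. Then the affine algebraic set V(f₁,…,fₘ) = {x ∈ ℂᵐ : f₁(x) = ⋯ = fₘ(x) = 0} is finite. -/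
/-!
By the Nullstellensatz, the hypothesis puts a power `X j ^ n j` of every variable into the ideal
`J` generated by the leading forms `f i⁺`, hence every form of degree `> ∑ j, n j` lies in `J`.
Such a form of degree `d` is `∑ i, c i * f i⁺` with `c i` homogeneous of degree `d - deg f i`, and
replacing `f i⁺` by `f i` changes it only in degrees `< d`. Descending on the degree, every
polynomial is congruent modulo the ideal `I` of the `f i` to one of degree `≤ ∑ j, n j`, so
`ℂ[x] ⧸ I` is finite-dimensional. The points of `V(I)` give pairwise distinct algebra maps `ℂ[x] ⧸ I → ℂ`, and
these are linearly independent, so there are finitely many of them.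
-/

open MvPolynomial

namespace MvPolynomial

variable {σ ι R : Type*}

section CommSemiring

variable [CommSemiring R]

section

attribute [local instance] gradedAlgebra

theorem coe_decompose_homogeneousSubmodule (p : MvPolynomial σ R) (n : ℕ) :
    (DirectSum.decompose (homogeneousSubmodule σ R) p n : MvPolynomial σ R) =
      homogeneousComponent n p :=
  decomposition.decompose'_apply p n

theorem homogeneousComponent_mul_of_isHomogeneous_right {q : MvPolynomial σ R} {e d : ℕ}
    (hq : q.IsHomogeneous e) (h : e ≤ d) (p : MvPolynomial σ R) :
    homogeneousComponent d (p * q) = homogeneousComponent (d - e) p * q := by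
  simpa only [coe_decompose_homogeneousSubmodule] using
    DirectSum.coe_decompose_mul_of_right_mem_of_le (homogeneousSubmodule σ R) (a := p) hq h

theorem homogeneousComponent_mul_of_isHomogeneous_left {p : MvPolynomial σ R} {e d : ℕ}
    (hp : p.IsHomogeneous e) (h : e ≤ d) (q : MvPolynomial σ R) :
    homogeneousComponent d (p * q) = p * homogeneousComponent (d - e) q := by
  simpa only [coe_decompose_homogeneousSubmodule] using
    DirectSum.coe_decompose_mul_of_left_mem_of_le (homogeneousSubmodule σ R) (b := q) hp h

theorem homogeneousComponent_mul_of_isHomogeneous_of_lt {q : MvPolynomial σ R} {e d : ℕ}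
    (hq : q.IsHomogeneous e) (h : d < e) (p : MvPolynomial σ R) :
    homogeneousComponent d (p * q) = 0 := by
  simpa only [coe_decompose_homogeneousSubmodule] using
    DirectSum.coe_decompose_mul_of_right_mem_of_not_le (homogeneousSubmodule σ R) (a := p) hq
      h.not_ge

end

theorem IsHomogeneous.mem_of_X_pow_mem [Fintype σ] {J : Ideal (MvPolynomial σ R)} {n : σ → ℕ}
    (hn : ∀ j, X j ^ n j ∈ J) {h : MvPolynomial σ R} {d : ℕ} (hh : h.IsHomogeneous d)
    (hd : ∑ j, n j < d) : h ∈ J := by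
  have hspan : Ideal.span ((fun s => monomial s (1 : R)) ''
      Set.range fun j => Finsupp.single j (n j)) ≤ J := by
    rw [Ideal.span_le, ← Set.range_comp]
    rintro _ ⟨j, rfl⟩
    simpa [X_pow_eq_monomial] using hn j
  refine hspan (mem_ideal_span_monomial_image.2 fun α hα => ?_)
  obtain ⟨j, hj⟩ : ∃ j, n j ≤ α j := by
    by_contra! hlt
    have hdeg : d = α.degree := hh.degree_eq_sum_deg_support hα
    have : α.degree ≤ ∑ j, n j :=
      α.degree_eq_sum ▸ Finset.sum_le_sum fun j _ => (hlt j).le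
    omega
  exact ⟨_, ⟨j, rfl⟩, Finsupp.single_le_iff.2 hj⟩

end CommSemiring

section CommRing

variable [CommRing R]

theorem totalDegree_sub_homogeneousComponent_lt {p : MvPolynomial σ R} {d : ℕ}
    (hp : p.totalDegree ≤ d) (hd : 0 < d) :
    (p - homogeneousComponent d p).totalDegree < d := by
  rw [totalDegree, Finset.sup_lt_iff hd]
  intro α hα
  rw [mem_support_iff, coeff_sub, coeff_homogeneousComponent] at hα
  split_ifs at hα with hα_deg
  · simp at hα
  · rw [sub_zero, ← mem_support_iff] at hα
    exact lt_of_le_of_ne ((le_totalDegree hα).trans hp) hα_deg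

theorem exists_totalDegree_homogeneousComponent_mul_sub_lt (g f : MvPolynomial σ R) {d : ℕ}
    (hd : 0 < d) :
    ∃ c, (homogeneousComponent d (g * homogeneousComponent f.totalDegree f) - c * f).totalDegree
      < d := by
  have hf := homogeneousComponent_isHomogeneous f.totalDegree f
  rcases le_or_gt f.totalDegree d with hle | hlt
  · -- The degree-`d` part of `c * f` is `c * f⁺`, so `c * f⁺` and `c * f` agree in degree `≥ d`.
    set c := homogeneousComponent (d - f.totalDegree) g
    have hc : c.IsHomogeneous (d - f.totalDegree) := homogeneousComponent_isHomogeneous _ _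
    have hcf : (c * f).totalDegree ≤ d :=
      (totalDegree_mul c f).trans (by have := hc.totalDegree_le; omega)
    have hcf_top : homogeneousComponent d (c * f) = c * homogeneousComponent f.totalDegree f := by
      rw [homogeneousComponent_mul_of_isHomogeneous_left hc (Nat.sub_le _ _), Nat.sub_sub_self hle]
    refine ⟨c, ?_⟩
    rw [homogeneousComponent_mul_of_isHomogeneous_right hf hle, ← hcf_top, ← neg_sub,
      totalDegree_neg]
    exact totalDegree_sub_homogeneousComponent_lt hcf hd
  · exact ⟨0, by simp [homogeneousComponent_mul_of_isHomogeneous_of_lt hf hlt, hd]⟩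

theorem exists_sub_mem_span_totalDegree_lt [Fintype ι] (f : ι → MvPolynomial σ R)
    {p : MvPolynomial σ R} {d : ℕ} (hp : p.totalDegree ≤ d) (hd : 0 < d)
    (htop : homogeneousComponent d p ∈
      Ideal.span (Set.range fun i => homogeneousComponent (f i).totalDegree (f i))) :
    ∃ g ∈ Ideal.span (Set.range f), (p - g).totalDegree < d := by
  obtain ⟨a, ha⟩ := (Submodule.mem_span_range_iff_exists_fun _).1 htop
  choose c hc using fun i => exists_totalDegree_homogeneousComponent_mul_sub_lt (a i) (f i) hd
  refine ⟨∑ i, c i * f i,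
    Ideal.sum_mem _ fun i _ => Ideal.mul_mem_left _ _ (Ideal.subset_span ⟨i, rfl⟩), ?_⟩
  have htop_eq : homogeneousComponent d p =
      ∑ i, homogeneousComponent d (a i * homogeneousComponent (f i).totalDegree (f i)) := by
    rw [← map_sum, ← homogeneousComponent_eq_self (homogeneousComponent_isHomogeneous d p), ← ha]
    rfl
  have hsplit : p - ∑ i, c i * f i = (p - homogeneousComponent d p) +
      ∑ i, (homogeneousComponent d (a i * homogeneousComponent (f i).totalDegree (f i))
        - c i * f i) := by
    rw [Finset.sum_sub_distrib, ← htop_eq]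
    ring
  rw [hsplit]
  refine (totalDegree_add _ _).trans_lt (max_lt (totalDegree_sub_homogeneousComponent_lt hp hd) ?_)
  exact (totalDegree_finsetSum _ _).trans_lt ((Finset.sup_lt_iff hd).2 fun i _ => hc i)

theorem exists_totalDegree_le_sub_mem_span [Fintype ι] (f : ι → MvPolynomial σ R) {D : ℕ}
    (hD : ∀ d, D < d → ∀ h : MvPolynomial σ R, h.IsHomogeneous d →
      h ∈ Ideal.span (Set.range fun i => homogeneousComponent (f i).totalDegree (f i)))
    (p : MvPolynomial σ R) :
    ∃ q : MvPolynomial σ R, q.totalDegree ≤ D ∧ p - q ∈ Ideal.span (Set.range f) := by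
  induction hn : p.totalDegree using Nat.strong_induction_on generalizing p with
  | _ n ih =>
    rcases le_or_gt n D with hle | hlt
    · exact ⟨p, hn ▸ hle, by simp⟩
    obtain ⟨g, hg, hpg⟩ := exists_sub_mem_span_totalDegree_lt f hn.le (by omega)
      (hD n hlt _ (homogeneousComponent_isHomogeneous n p))
    obtain ⟨q, hq, hpgq⟩ := ih _ (hn ▸ hpg) (p - g) rfl
    exact ⟨q, hq, by convert add_mem hpgq hg using 1; ring⟩

theorem finite_quotient_of_forall_exists_totalDegree_le [Finite σ] {I : Ideal (MvPolynomial σ R)}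
    {D : ℕ} (h : ∀ p : MvPolynomial σ R, ∃ q : MvPolynomial σ R, q.totalDegree ≤ D ∧ p - q ∈ I) :
    Module.Finite R (MvPolynomial σ R ⧸ I) := by
  refine Module.Finite.of_surjective
    ((Ideal.Quotient.mkₐ R I).toLinearMap ∘ₗ (restrictTotalDegree σ R D).subtype) fun x => ?_
  obtain ⟨p, rfl⟩ := Ideal.Quotient.mk_surjective x
  obtain ⟨q, hq, hpq⟩ := h p
  exact ⟨⟨q, (mem_restrictTotalDegree σ D q).2 hq⟩, (Ideal.Quotient.eq.2 hpq).symm⟩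

end CommRing

theorem finite_zeroLocus_of_finite_quotient {k K : Type*} [Field k] [Field K] [Algebra k K]
    (I : Ideal (MvPolynomial σ k)) [Module.Finite k (MvPolynomial σ k ⧸ I)] :
    (zeroLocus K I).Finite := by
  let φ : zeroLocus K I → (MvPolynomial σ k ⧸ I →ₐ[k] K) :=
    fun x => Ideal.Quotient.liftₐ I (aeval x.1) x.2
  have hφ (x : zeroLocus K I) : (φ x).comp (Ideal.Quotient.mkₐ k I) = aeval x.1 :=
    Ideal.Quotient.liftₐ_comp I _ _
  refine Set.finite_coe_iff.1 (Finite.of_injective φ fun x y hxy => ?_)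
  ext j
  simpa [hφ] using congr(($hxy).comp (Ideal.Quotient.mkₐ k I) (X j))

end MvPolynomial

/-- If the top-degree homogeneous parts of `f₁,…,fₘ ∈ ℂ[x₁,…,xₘ]` have no common
zero other than the origin (they do not intersect at infinity), then the affine
algebraic set `V(f₁,…,fₘ)` is finite. -/
theorem stmt7 (m : ℕ) (f : Fin m → MvPolynomial (Fin m) ℂ)
    (hf : ∀ x : Fin m → ℂ,
      (∀ i, eval x (homogeneousComponent (f i).totalDegree (f i)) = 0) → x = 0) :
    {x : Fin m → ℂ | ∀ i, eval x (f i) = 0}.Finite := by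
  set J := Ideal.span (Set.range fun i => homogeneousComponent (f i).totalDegree (f i))
  have hX : ∀ j, X j ∈ J.radical := by
    intro j
    rw [← vanishingIdeal_zeroLocus_eq_radical (K := ℂ), mem_vanishingIdeal_iff]
    intro x hx
    rw [zeroLocus_span] at hx
    rw [hf x fun i => by simpa using hx _ ⟨i, rfl⟩]
    simp
  choose n hn using hX
  have : Module.Finite ℂ (MvPolynomial (Fin m) ℂ ⧸ Ideal.span (Set.range f)) :=
    finite_quotient_of_forall_exists_totalDegree_le
      (exists_totalDegree_le_sub_mem_span f (D := ∑ j, n j) fun _ hd _ hh =>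
        hh.mem_of_X_pow_mem hn hd)
  simpa [zeroLocus_span] using
    finite_zeroLocus_of_finite_quotient (K := ℂ) (Ideal.span (Set.range f))
end

section
/- Let V(q₁,q₂,q₃) = (a₅/2)q₁²q₂ + a₅q₂³ + (1/3)q₃³ with a₅ ≠ 0, and H = (p₁²+p₂²+p₃²)/2 + V. Then I₁ = p₃²/2 + q₃³/3 and I₂ = 8p₁(q₁p₂ − q₂p₁) + a₅q₁²(q₁² + 4q₂²) are both first integrals of H, i.e., {H,I₁} = {H,I₂} = 0 with respect to the canonical Poisson bracket. -/
open MvPolynomial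

/-- Canonical Poisson bracket on `ℂ⁶` with coordinates
`(q₁,q₂,q₃,p₁,p₂,p₃) = (x₀,…,x₅)`. -/
noncomputable def poissonBracket (F G : MvPolynomial (Fin 6) ℂ) :
    MvPolynomial (Fin 6) ℂ :=
  ∑ i : Fin 3,
    (pderiv (Fin.castAdd 3 i) F * pderiv (Fin.natAdd 3 i) G
      - pderiv (Fin.natAdd 3 i) F * pderiv (Fin.castAdd 3 i) G)

lemma poissonBracket_eq (F G : MvPolynomial (Fin 6) ℂ) :
    poissonBracket F G =
      pderiv 0 F * pderiv 3 G - pderiv 3 F * pderiv 0 G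
        + (pderiv 1 F * pderiv 4 G - pderiv 4 F * pderiv 1 G)
        + (pderiv 2 F * pderiv 5 G - pderiv 5 F * pderiv 2 G) := by
  rw [poissonBracket, Fin.sum_univ_three]
  rfl

noncomputable def hamiltonian (a5 : ℂ) : MvPolynomial (Fin 6) ℂ :=
  C (1/2 : ℂ) * (X 3 ^ 2 + X 4 ^ 2 + X 5 ^ 2)
    + C (a5 / 2) * X 0 ^ 2 * X 1 + C a5 * X 1 ^ 3 + C (1/3 : ℂ) * X 2 ^ 3

noncomputable def firstIntegral₁ : MvPolynomial (Fin 6) ℂ :=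
  C (1/2 : ℂ) * X 5 ^ 2 + C (1/3 : ℂ) * X 2 ^ 3

noncomputable def firstIntegral₂ (a5 : ℂ) : MvPolynomial (Fin 6) ℂ :=
  C (8 : ℂ) * X 3 * (X 0 * X 4 - X 1 * X 3)
    + C a5 * X 0 ^ 2 * (X 0 ^ 2 + C (4 : ℂ) * X 1 ^ 2)

/- Evaluating at a point of `ℂ⁶` moves the identity into the field `ℂ`, where `ring` can cancel
the constants `2⁻¹ * 2` and `3⁻¹ * 3` produced by the Leibniz rule. -/
theorem poissonBracket_hamiltonian_firstIntegral₁ (a5 : ℂ) :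
    poissonBracket (hamiltonian a5) firstIntegral₁ = 0 := by
  refine MvPolynomial.funext fun x => ?_
  simp only [poissonBracket_eq, hamiltonian, firstIntegral₁, map_add, map_sub, map_mul, map_pow,
    Derivation.leibniz, Derivation.leibniz_pow, derivation_C, pderiv_X, Pi.single_apply,
    smul_eq_mul, nsmul_eq_mul, map_natCast, map_zero, map_one, eval_C, eval_X,
    Fin.isValue, Fin.reduceEq, if_true, if_false]
  ring

theorem poissonBracket_hamiltonian_firstIntegral₂ (a5 : ℂ) :
    poissonBracket (hamiltonian a5) (firstIntegral₂ a5) = 0 := by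
  refine MvPolynomial.funext fun x => ?_
  simp only [poissonBracket_eq, hamiltonian, firstIntegral₂, map_add, map_sub, map_mul, map_pow,
    Derivation.leibniz, Derivation.leibniz_pow, derivation_C, pderiv_X, Pi.single_apply,
    smul_eq_mul, nsmul_eq_mul, map_natCast, map_zero, map_one, eval_C, eval_X,
    Fin.isValue, Fin.reduceEq, if_true, if_false]
  ring

theorem stmt13_general (a5 : ℂ) :
    let H : MvPolynomial (Fin 6) ℂ :=
      C (1/2 : ℂ) * (X 3 ^ 2 + X 4 ^ 2 + X 5 ^ 2)
        + C (a5 / 2) * X 0 ^ 2 * X 1 + C a5 * X 1 ^ 3 + C (1/3 : ℂ) * X 2 ^ 3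
    let I1 : MvPolynomial (Fin 6) ℂ := C (1/2 : ℂ) * X 5 ^ 2 + C (1/3 : ℂ) * X 2 ^ 3
    let I2 : MvPolynomial (Fin 6) ℂ :=
      C (8 : ℂ) * X 3 * (X 0 * X 4 - X 1 * X 3)
        + C a5 * X 0 ^ 2 * (X 0 ^ 2 + C (4 : ℂ) * X 1 ^ 2)
    poissonBracket H I1 = 0 ∧ poissonBracket H I2 = 0 :=
  ⟨poissonBracket_hamiltonian_firstIntegral₁ a5, poissonBracket_hamiltonian_firstIntegral₂ a5⟩

/-- For `V = (a₅/2)q₁²q₂ + a₅q₂³ + (1/3)q₃³` with `a₅ ≠ 0`,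
`I₁ = p₃²/2 + q₃³/3` and `I₂ = 8p₁(q₁p₂ − q₂p₁) + a₅q₁²(q₁² + 4q₂²)` are first
integrals of `H = (p₁²+p₂²+p₃²)/2 + V`. -/
theorem stmt13 (a5 : ℂ) (h : a5 ≠ 0) :
    let H : MvPolynomial (Fin 6) ℂ :=
      C (1/2 : ℂ) * (X 3 ^ 2 + X 4 ^ 2 + X 5 ^ 2)
        + C (a5 / 2) * X 0 ^ 2 * X 1 + C a5 * X 1 ^ 3 + C (1/3 : ℂ) * X 2 ^ 3
    let I1 : MvPolynomial (Fin 6) ℂ := C (1/2 : ℂ) * X 5 ^ 2 + C (1/3 : ℂ) * X 2 ^ 3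
    let I2 : MvPolynomial (Fin 6) ℂ :=
      C (8 : ℂ) * X 3 * (X 0 * X 4 - X 1 * X 3)
        + C a5 * X 0 ^ 2 * (X 0 ^ 2 + C (4 : ℂ) * X 1 ^ 2)
    poissonBracket H I1 = 0 ∧ poissonBracket H I2 = 0 :=
  stmt13_general a5
end
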